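/- arXiv:1502.04633 — 4 statements merged into one kernel-verified Lean document; each statement's English description precedes it below -/
import Mathlib

section
/- Let F be a descending star network of order n, and let ρ_{ℓ_1}, ρ_{ℓ_2} be directed paths in F from sources ℓ_1 < ℓ_2 to sinks m_1, m_2 respectively. Then ρ_{ℓ_1} and ρ_{ℓ_2} share a vertex if and only if there exists a directed path in F from source ℓ_1 to sink m_2. -/
namespace ZigZag

noncomputable section

attribute [local instance] Classical.propDecidable

/-- Vertices of a network of order `n` built from `t` stars:
sources, sinks and central vertices. -/
inductive V (n t : ℕ) : Type
  | src : Fin n → V n t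
  | snk : Fin n → V n t
  | ctr : Fin t → V n t
  deriving DecidableEq

/-- Data of a concatenation `G_{[c 0, d 0]} ∘ ⋯ ∘ G_{[c (t-1), d (t-1)]}` of star
networks of order `n`: pairwise distinct, pairwise non-nesting intervals
satisfying the triple-overlap condition. -/
structure IntervalData (n t : ℕ) : Type where
  c : Fin t → Fin n
  d : Fin t → Fin n
  cd_le : ∀ k, c k ≤ d k
  nonnest : ∀ k l : Fin t, k ≠ l → ¬ (c k ≤ c l ∧ d l ≤ d k)
  tripleOverlap : ∀ k l m : Fin t, k < l → l < m →
    (c k ≤ d l ∧ c l ≤ d k) → (c l ≤ d m ∧ c m ≤ d l) →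
    (c k < c l ∧ c l < c m) ∨ (c m < c l ∧ c l < c k)

variable {n t : ℕ}

/-- `i` belongs to the `k`-th interval `[c k, d k]`. -/
def IntervalData.mem (D : IntervalData n t) (k : Fin t) (i : Fin n) : Prop :=
  D.c k ≤ i ∧ i ≤ D.d k

/-- Edges of the zig-zag network associated to `D` (collapsing the parallel
central edges, i.e. keeping one path per covering pair). -/
inductive Edge (D : IntervalData n t) : V n t → V n t → Prop
  | srcCtr (i : Fin n) (k : Fin t) : D.mem k i → (∀ l, l < k → ¬ D.mem l i) →
      Edge D (V.src i) (V.ctr k)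
  | ctrSnk (i : Fin n) (k : Fin t) : D.mem k i → (∀ l, k < l → ¬ D.mem l i) →
      Edge D (V.ctr k) (V.snk i)
  | srcSnk (i : Fin n) : (∀ k, ¬ D.mem k i) → Edge D (V.src i) (V.snk i)
  | ctrCtr (i : Fin n) (k l : Fin t) : k < l → D.mem k i → D.mem l i →
      (∀ m, k < m → m < l → ¬ D.mem m i) → Edge D (V.ctr k) (V.ctr l)

/-- A directed path (a nonempty list of successively adjacent vertices)
from `x` to `y` in the digraph with edge relation `E`. -/
def PathIn (E : V n t → V n t → Prop) (p : List (V n t)) (x y : V n t) : Prop :=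
  p ≠ [] ∧ p.Chain' E ∧ p.head? = some x ∧ p.getLast? = some y

/-- A directed path from source `i` to sink `j` in the zig-zag network of `D`. -/
def IsPathFromTo (D : IntervalData n t) (p : List (V n t)) (i j : Fin n) : Prop :=
  PathIn (Edge D) p (V.src i) (V.snk j)

/-- The intervals `[c k, d k]` and `[c l, d l]` intersect. -/
def Intersects (D : IntervalData n t) (k l : Fin t) : Prop :=
  D.c k ≤ D.d l ∧ D.c l ≤ D.d k

/-- The covering relation `⋖` on the intervals of the concatenation. -/
def Cov (D : IntervalData n t) (k l : Fin t) : Prop :=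
  k < l ∧ Intersects D k l ∧
    ∀ m, k < m → m < l → ∀ i : Fin n, ¬ (D.mem k i ∧ D.mem l i ∧ D.mem m i)

/-- The strict partial order `≺` generated by the covering relation. -/
def Prec (D : IntervalData n t) : Fin t → Fin t → Prop :=
  Relation.TransGen (Cov D)

/-- A path family of type `v`: the `i`-th path runs from source `i` to sink `v i`. -/
def IsFamilyOfType (D : IntervalData n t) (fam : Fin n → List (V n t))
    (v : Equiv.Perm (Fin n)) : Prop :=
  ∀ i, IsPathFromTo D (fam i) i (v i)

/-- The path family covers the network: every edge lies on some path. -/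
def Covers (D : IntervalData n t) (fam : Fin n → List (V n t)) : Prop :=
  ∀ x y, Edge D x y → ∃ i, [x, y] <:+: fam i

/-- Bruhat order on `S_n`. -/
def BruhatLE (v w : Equiv.Perm (Fin n)) : Prop :=
  ∀ i j : Fin n,
    (Finset.univ.filter fun k : Fin n => k ≤ i ∧ j ≤ v k).card ≤
      (Finset.univ.filter fun k : Fin n => k ≤ i ∧ j ≤ w k).card

/-- `D` is interval data for the zig-zag network `F_w`: a path family of type `v`
covers it iff `v ≤ w` in Bruhat order, and such families are unique. -/
def Represents (D : IntervalData n t) (w : Equiv.Perm (Fin n)) : Prop :=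
  ∀ v : Equiv.Perm (Fin n),
    ((∃ fam, IsFamilyOfType D fam v ∧ Covers D fam) ↔ BruhatLE v w) ∧
    ∀ fam fam', IsFamilyOfType D fam v → Covers D fam →
      IsFamilyOfType D fam' v → Covers D fam' → fam = fam'

def Avoids3412 (w : Equiv.Perm (Fin n)) : Prop :=
  ¬ ∃ i1 i2 i3 i4 : Fin n, i1 < i2 ∧ i2 < i3 ∧ i3 < i4 ∧
    w i3 < w i4 ∧ w i4 < w i1 ∧ w i1 < w i2

def Avoids4231 (w : Equiv.Perm (Fin n)) : Prop :=
  ¬ ∃ i1 i2 i3 i4 : Fin n, i1 < i2 ∧ i2 < i3 ∧ i3 < i4 ∧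
    w i4 < w i2 ∧ w i2 < w i3 ∧ w i3 < w i1

def Avoids312 (w : Equiv.Perm (Fin n)) : Prop :=
  ¬ ∃ i1 i2 i3 : Fin n, i1 < i2 ∧ i2 < i3 ∧ w i2 < w i3 ∧ w i3 < w i1

/-- The source-`i`-to-sink-`i` and source-`j`-to-sink-`j` paths share a vertex. -/
def PathsIntersect (D : IntervalData n t) (i j : Fin n) : Prop :=
  ∃ p q, IsPathFromTo D p i i ∧ IsPathFromTo D q j j ∧ ∃ x, x ∈ p ∧ x ∈ q

/-- The strict order of the poset `P(F)`. -/
def PRel (D : IntervalData n t) (i j : Fin n) : Prop :=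
  i < j ∧ ¬ PathsIntersect D i j

/-- Descending star network: `c 0 > c 1 > ⋯`. -/
def Descending (D : IntervalData n t) : Prop :=
  ∀ k l : Fin t, k < l → D.c l < D.c k

/-- Incomparability for a strict order. -/
def Incomp {α : Type*} (r : α → α → Prop) (x y : α) : Prop :=
  x ≠ y ∧ ¬ r x y ∧ ¬ r y x

/-- A strict order is a unit interval order if it is (3+1)-free and (2+2)-free. -/
def UnitIntervalOrder {α : Type*} (r : α → α → Prop) : Prop :=
  (¬ ∃ a b c x, r a b ∧ r b c ∧ Incomp r x a ∧ Incomp r x b ∧ Incomp r x c) ∧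
  (¬ ∃ a b x y, r a b ∧ r x y ∧ Incomp r a x ∧ Incomp r a y ∧
      Incomp r b x ∧ Incomp r b y)

/-- `lam` is a partition of `n`. -/
def IsPartition (lam : List ℕ) (n : ℕ) : Prop :=
  lam.Pairwise (· ≥ ·) ∧ (∀ x ∈ lam, 0 < x) ∧ lam.sum = n

/-- An `F`-tableau of shape `lam` (French notation): a covering path family
together with an arrangement of the `n` source indices into rows of
lengths `lam`. -/
structure Tableau (D : IntervalData n t) (lam : List ℕ) : Type where
  fam : Fin n → List (V n t)
  typ : Equiv.Perm (Fin n)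
  isFam : IsFamilyOfType D fam typ
  covers : Covers D fam
  rows : List (List (Fin n))
  shape : rows.map List.length = lam
  nodup : rows.flatten.Nodup
  complete : ∀ i : Fin n, i ∈ rows.flatten

namespace Tableau

variable {D : IntervalData n t} {lam : List ℕ}

/-- The paths indexed by `a` and `b` share a vertex. -/
def Intersect (U : Tableau D lam) (a b : Fin n) : Prop :=
  ∃ x, x ∈ U.fam a ∧ x ∈ U.fam b

def RowClosed (U : Tableau D lam) : Prop :=
  ∀ r ∈ U.rows, (r.map ⇑U.typ).Perm r

def LeftRowStrict (U : Tableau D lam) : Prop :=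
  ∀ r ∈ U.rows, r.Chain' (· < ·)

def RowSemistrict (U : Tableau D lam) : Prop :=
  ∀ r ∈ U.rows, r.Chain' fun a b => ¬ (b < a ∧ ¬ U.Intersect a b)

def CycRowSemistrict (U : Tableau D lam) : Prop :=
  U.RowSemistrict ∧ ∀ r ∈ U.rows, ∀ a b : Fin n,
    r.getLast? = some a → r.head? = some b → ¬ (b < a ∧ ¬ U.Intersect a b)

def RowStrict (U : Tableau D lam) : Prop :=
  ∀ r ∈ U.rows, r.Chain' fun a b => a < b ∧ ¬ U.Intersect a b

def RightAnchored (U : Tableau D lam) : Prop :=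
  ∀ r ∈ U.rows, ∀ a : Fin n, r.getLast? = some a → ∀ b ∈ r, a ≤ b

def LeftAnchored (U : Tableau D lam) : Prop :=
  ∀ r ∈ U.rows, ∀ a : Fin n, r.head? = some a → ∀ b ∈ r, a ≤ b

def Cylindrical (U : Tableau D lam) : Prop :=
  ∀ r ∈ U.rows, r.map ⇑U.typ = r.rotate 1

def TypeE (U : Tableau D lam) : Prop := U.typ = 1

/-- `inv (U_1 ∘ ⋯ ∘ U_r)`: inversions of the concatenation of the rows. -/
def invConcat (U : Tableau D lam) : ℕ :=
  Set.ncard {p : Fin U.rows.flatten.length × Fin U.rows.flatten.length |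
    p.1 < p.2 ∧ U.Intersect (U.rows.flatten.get p.1) (U.rows.flatten.get p.2) ∧
      U.rows.flatten.get p.2 < U.rows.flatten.get p.1}

/-- `inv (U^R)` for a one-rowed tableau `U`. -/
def invR (U : Tableau D lam) : ℕ :=
  Set.ncard {p : Fin U.rows.flatten.length × Fin U.rows.flatten.length |
    p.1 < p.2 ∧ U.Intersect (U.rows.flatten.get p.1) (U.rows.flatten.get p.2) ∧
      U.rows.flatten.get p.1 < U.rows.flatten.get p.2}

/-- `rinv` of a single row `r`. -/
def rinvRow (U : Tableau D lam) (r : List (Fin n)) : ℕ :=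
  Set.ncard {p : Fin r.length × Fin r.length |
    p.1 < p.2 ∧ U.Intersect (r.get p.1) (r.get p.2) ∧
      U.typ (r.get p.2) < U.typ (r.get p.1)}

/-- `rinv (U_1) + ⋯ + rinv (U_r)`. -/
def rinvRowsSum (U : Tableau D lam) : ℕ := (U.rows.map U.rinvRow).sum

/-- `inv (U^tr)`: inversions between entries of distinct rows. -/
def invTr (U : Tableau D lam) : ℕ :=
  Set.ncard {p : Fin n × Fin n |
    (∃ j1 j2 : ℕ, j1 < j2 ∧ p.1 ∈ U.rows.getD j1 [] ∧ p.2 ∈ U.rows.getD j2 []) ∧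
      U.Intersect p.1 p.2 ∧ p.2 < p.1}

/-- `rinv (U^tr)`: right inversions between entries of distinct rows. -/
def rinvTr (U : Tableau D lam) : ℕ :=
  Set.ncard {p : Fin n × Fin n |
    (∃ j1 j2 : ℕ, j1 < j2 ∧ p.1 ∈ U.rows.getD j1 [] ∧ p.2 ∈ U.rows.getD j2 []) ∧
      U.Intersect p.1 p.2 ∧ U.typ p.2 < U.typ p.1}

end Tableau

/-- Row `j` of `U` has entry set `I j`. -/
def RowContents {D : IntervalData n t} {lam : List ℕ} (U : Tableau D lam)
    (I : Fin lam.length → Finset (Fin n)) : Prop :=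
  ∀ j : Fin lam.length, (U.rows.getD (j : ℕ) []).toFinset = I j

/-- `[a]_q = 1 + q + ⋯ + q^(a-1)`. -/
noncomputable def qNat (a : ℕ) : Polynomial ℤ := ∑ i ∈ Finset.range a, Polynomial.X ^ i

/-- `[a]_q! = [a]_q [a-1]_q ⋯ [1]_q`. -/
noncomputable def qFact (a : ℕ) : Polynomial ℤ := ∏ i ∈ Finset.range a, qNat (i + 1)

/-- The network is connected as an (undirected) graph. -/
def Connected (D : IntervalData n t) : Prop :=
  ∀ x y : V n t, Relation.ReflTransGen (fun a b => Edge D a b ∨ Edge D b a) x y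

noncomputable def Onum (D : IntervalData n t) : Polynomial ℤ :=
  ∏ k : Fin t, qFact ((D.d k : ℕ) - (D.c k : ℕ))

noncomputable def Oden (D : IntervalData n t) : Polynomial ℤ :=
  ∏ p : Fin t × Fin t,
    if Cov D p.1 p.2 then
      if D.c p.1 < D.c p.2 then qFact ((D.d p.1 : ℕ) - (D.c p.2 : ℕ))
      else qFact ((D.d p.2 : ℕ) - (D.c p.1 : ℕ))
    else 1

/-- The rational function `O(F)`, an element of the fraction field of `ℤ[q]`. -/
noncomputable def OF (D : IntervalData n t) : FractionRing (Polynomial ℤ) :=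
  if Connected D then
    algebraMap (Polynomial ℤ) (FractionRing (Polynomial ℤ)) (Onum D) /
      algebraMap (Polynomial ℤ) (FractionRing (Polynomial ℤ)) (Oden D)
  else 0

/-- Cycle type of a permutation, as a partition of `n` (including fixed points). -/
noncomputable def fullCycleType (v : Equiv.Perm (Fin n)) : Multiset ℕ :=
  v.cycleType + Multiset.replicate (n - v.support.card) 1

/-- `z_λ = 1^{α_1} 2^{α_2} ⋯ α_1! α_2! ⋯`. -/
noncomputable def zPart (lam : List ℕ) : ℕ :=
  lam.prod * ∏ i ∈ lam.toFinset, (lam.count i).factorial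

/-- `rinv (U(u, π))` where the one-rowed tableau `U(u,π)` lists the paths
`fam (u 0), fam (u 1), …` whose sinks are `v 0, v 1, …`. -/
def rinvU (D : IntervalData n t) (fam : Fin n → List (V n t))
    (u v : Equiv.Perm (Fin n)) : ℕ :=
  Set.ncard {p : Fin n × Fin n | p.1 < p.2 ∧
    (∃ x, x ∈ fam (u p.1) ∧ x ∈ fam (u p.2)) ∧ v p.2 < v p.1}

/-- Edges of the restricted network `F|_S`, the union of the
source-`i`-to-sink-`i` paths for `i ∈ S`. -/
def REdge (D : IntervalData n t) (S : Finset (Fin n)) (x y : V n t) : Prop :=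
  Edge D x y ∧ ∃ i ∈ S, ∃ p, IsPathFromTo D p i i ∧ [x, y] <:+: p

/-- A cylindrical one-rowed tableau of the restricted network `F|_S`. -/
structure SubRowTab (D : IntervalData n t) (S : Finset (Fin n)) : Type where
  row : List (Fin n)
  nodup : row.Nodup
  content : row.toFinset = S
  fam : Fin n → List (V n t)
  isPath : ∀ m : Fin row.length,
    PathIn (REdge D S) (fam (row.get m)) (V.src (row.get m))
      (V.snk (row.get ⟨((m : ℕ) + 1) % row.length, Nat.mod_lt _ m.pos⟩))
  covers : ∀ x y, REdge D S x y → ∃ a ∈ row, [x, y] <:+: fam a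

/-- Inversions of a one-rowed subnetwork tableau. -/
def SubRowTab.Inv {D : IntervalData n t} {S : Finset (Fin n)}
    (W : SubRowTab D S) : ℕ :=
  Set.ncard {p : Fin W.row.length × Fin W.row.length | p.1 < p.2 ∧
    (∃ x, x ∈ W.fam (W.row.get p.1) ∧ x ∈ W.fam (W.row.get p.2)) ∧
    W.row.get p.2 < W.row.get p.1}

def SubRowTab.LeftAnchored {D : IntervalData n t} {S : Finset (Fin n)}
    (W : SubRowTab D S) : Prop :=
  ∀ a : Fin n, W.row.head? = some a → ∀ b ∈ W.row, a ≤ b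

/-- The concatenation `V(F,I)_1 ∘ ⋯ ∘ V(F,I)_r` of the rows of the tableau
`V(F,I)`, as a list of source indices: each block `I j` in increasing order. -/
def Vlist {r : ℕ} (I : Fin r → Finset (Fin n)) : List (Fin n) :=
  (List.finRange r).flatMap fun j => (I j).sort (· ≤ ·)

/-- Inversions of a list of indices, filled with the type-`e` path family. -/
def invListE (D : IntervalData n t) (l : List (Fin n)) : ℕ :=
  Set.ncard {p : Fin l.length × Fin l.length | p.1 < p.2 ∧
    PathsIntersect D (l.get p.1) (l.get p.2) ∧ l.get p.2 < l.get p.1}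

/-!
Splicing two paths at a common vertex gives a path from source `ℓ₁` to sink `m₂`, in any
network. Conversely, in a descending network both `c` and `d` decrease, so the stars containing
a fixed index are consecutive, central edges only join consecutive stars, and a path from a
central vertex to sink `m` passes through every later star up to the last one containing `m`.
A path from `ℓ₁` to `m₂` shows that the first star containing `ℓ₁`, entered by `ρ_{ℓ₁}`, comes no
later than the last star containing `m₂`; the first star containing `ℓ₂` comes no later still,
so `ρ_{ℓ₂}` passes through the central vertex where `ρ_{ℓ₁}` starts.
-/

section Paths

variable {E : V n t → V n t → Prop}

theorem pathIn_iff {p : List (V n t)} {x y : V n t} :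
    PathIn E p x y ↔ p ≠ [] ∧ p.IsChain E ∧ p.head? = some x ∧ p.getLast? = some y :=
  Iff.rfl

theorem PathIn.start_mem {p : List (V n t)} {x y : V n t} (hp : PathIn E p x y) : x ∈ p :=
  List.mem_of_head? hp.2.2.1

theorem pathIn_singleton {x u w : V n t} : PathIn E [x] u w ↔ x = u ∧ x = w := by
  simp [pathIn_iff, eq_comm]

theorem pathIn_cons_cons {x y u w : V n t} {q : List (V n t)} :
    PathIn E (x :: y :: q) u w ↔ x = u ∧ E x y ∧ PathIn E (y :: q) y w := by
  simp [pathIn_iff, List.isChain_cons_cons]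
  tauto

/-- Paths need not be simple, so any two paths through a common vertex can be spliced there. -/
theorem PathIn.splice {p q : List (V n t)} {x y u w z : V n t} (hp : PathIn E p x y)
    (hzp : z ∈ p) (hq : PathIn E q u w) (hzq : z ∈ q) : ∃ r, PathIn E r x w := by
  obtain ⟨p₁, p₂, rfl⟩ := List.append_of_mem hzp
  obtain ⟨q₁, q₂, rfl⟩ := List.append_of_mem hzq
  obtain ⟨-, hpc, hph, -⟩ := pathIn_iff.mp hp
  obtain ⟨-, hqc, -, hql⟩ := pathIn_iff.mp hq
  refine ⟨p₁ ++ z :: q₂, pathIn_iff.mpr ⟨by simp, ?_, ?_, ?_⟩⟩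
  · have h₁ : (p₁ ++ [z]).IsChain E := by
      simpa using (show (p₁ ++ [z] ++ p₂).IsChain E by simpa using hpc).left_of_append
    simpa using h₁.append_overlap (hqc.right_of_append (l₁ := q₁)) (List.cons_ne_nil z [])
  · cases p₁ <;> simpa using hph
  · simpa [List.getLast?_append] using hql

end Paths

section Network

variable {D : IntervalData n t}

theorem Descending.d_lt_d (hdesc : Descending D) {k l : Fin t} (hkl : k < l) :
    D.d l < D.d k :=
  lt_of_not_ge fun hle => D.nonnest l k hkl.ne' ⟨(hdesc k l hkl).le, hle⟩

theorem Descending.mem_of_le_of_le (hdesc : Descending D) {k m l : Fin t} {i : Fin n}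
    (hkm : k ≤ m) (hml : m ≤ l) (hk : D.mem k i) (hl : D.mem l i) : D.mem m i := by
  constructor
  · rcases hkm.eq_or_lt with rfl | hlt
    · exact hk.1
    · exact (hdesc k m hlt).le.trans hk.1
  · rcases hml.eq_or_lt with rfl | hlt
    · exact hl.2
    · exact hl.2.trans (hdesc.d_lt_d hlt).le

theorem Descending.le_of_lt_of_mem (hdesc : Descending D) {l₁ l₂ : Fin n} {a₁ a₂ : Fin t}
    (hl : l₁ < l₂) (h₁ : D.mem a₁ l₁) (h₂ : D.mem a₂ l₂) (hfirst : ∀ k < a₂, ¬ D.mem k l₂) :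
    a₂ ≤ a₁ :=
  le_of_not_gt fun hlt => hfirst a₁ hlt ⟨h₁.1.trans hl.le, h₂.2.trans (hdesc.d_lt_d hlt).le⟩

theorem edge_src_snk_iff {l m : Fin n} :
    Edge D (V.src l) (V.snk m) ↔ l = m ∧ ∀ k, ¬ D.mem k l := by
  constructor
  · rintro ⟨⟩
    exact ⟨rfl, ‹_›⟩
  · rintro ⟨rfl, h⟩
    exact Edge.srcSnk l h

theorem edge_src_ctr_iff {l : Fin n} {a : Fin t} :
    Edge D (V.src l) (V.ctr a) ↔ D.mem a l ∧ ∀ k < a, ¬ D.mem k l := by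
  constructor
  · rintro ⟨⟩
    exact ⟨‹_›, ‹_›⟩
  · rintro ⟨h, hfirst⟩
    exact Edge.srcCtr l a h hfirst

theorem not_edge_snk {i : Fin n} {y : V n t} : ¬ Edge D (V.snk i) y := by
  rintro ⟨⟩

theorem PathIn.eq_singleton_snk {q : List (V n t)} {i : Fin n} {y : V n t}
    (hq : PathIn (Edge D) q (V.snk i) y) : q = [V.snk i] ∧ y = V.snk i := by
  match q, hq with
  | [], hq => exact absurd rfl hq.1
  | [_], hq => obtain ⟨rfl, rfl⟩ := pathIn_singleton.mp hq; exact ⟨rfl, rfl⟩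
  | _ :: _ :: _, hq =>
    obtain ⟨rfl, he, -⟩ := pathIn_cons_cons.mp hq
    exact absurd he not_edge_snk

theorem IsPathFromTo.eq_or_exists_ctr {p : List (V n t)} {l m : Fin n}
    (hp : IsPathFromTo D p l m) :
    (p = [V.src l, V.snk m] ∧ Edge D (V.src l) (V.snk m)) ∨
      ∃ a q, p = V.src l :: q ∧ Edge D (V.src l) (V.ctr a) ∧
        PathIn (Edge D) q (V.ctr a) (V.snk m) := by
  match p, hp with
  | [], hp => exact absurd rfl hp.1
  | [_], hp => obtain ⟨rfl, ⟨⟩⟩ := pathIn_singleton.mp hp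
  | _ :: y :: q, hp =>
    obtain ⟨rfl, he, hq⟩ := pathIn_cons_cons.mp hp
    cases y with
    | src i => rcases he
    | snk i =>
      obtain ⟨hq, hi⟩ := hq.eq_singleton_snk
      obtain ⟨rfl⟩ : m = i := by simpa using hi
      exact Or.inl ⟨by rw [hq], he⟩
    | ctr a => exact Or.inr ⟨a, _, rfl, he, hq⟩

theorem PathIn.exists_le_mem {q : List (V n t)} {a : Fin t} {m : Fin n}
    (hq : PathIn (Edge D) q (V.ctr a) (V.snk m)) : ∃ k, a ≤ k ∧ D.mem k m := by
  induction q generalizing a with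
  | nil => exact absurd rfl hq.1
  | cons x q ih =>
    cases q with
    | nil => obtain ⟨rfl, ⟨⟩⟩ := pathIn_singleton.mp hq
    | cons y q =>
      obtain ⟨rfl, he, hq⟩ := pathIn_cons_cons.mp hq
      cases he with
      | ctrSnk i _ hi _ =>
        obtain ⟨-, hmi⟩ := hq.eq_singleton_snk
        obtain ⟨rfl⟩ : m = i := by simpa using hmi
        exact ⟨a, le_rfl, hi⟩
      | ctrCtr i _ l hal _ _ _ =>
        obtain ⟨k, hlk, hk⟩ := ih hq
        exact ⟨k, hal.le.trans hlk, hk⟩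

theorem Descending.ctr_mem_of_pathIn (hdesc : Descending D) {q : List (V n t)} {a j k : Fin t}
    {m : Fin n} (hq : PathIn (Edge D) q (V.ctr a) (V.snk m)) (haj : a ≤ j) (hjk : j ≤ k)
    (hk : D.mem k m) : V.ctr j ∈ q := by
  induction q generalizing a with
  | nil => exact absurd rfl hq.1
  | cons x q ih =>
    rcases haj.eq_or_lt with rfl | haj
    · exact hq.start_mem
    cases q with
    | nil => obtain ⟨rfl, ⟨⟩⟩ := pathIn_singleton.mp hq
    | cons y q =>
      obtain ⟨rfl, he, hq⟩ := pathIn_cons_cons.mp hq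
      cases he with
      | ctrSnk i _ _ hlast =>
        obtain ⟨-, hmi⟩ := hq.eq_singleton_snk
        obtain ⟨rfl⟩ : m = i := by simpa using hmi
        exact absurd hk (hlast k (haj.trans_le hjk))
      | ctrCtr i _ l _ hai hli hbetween =>
        have hlj : l ≤ j := le_of_not_gt fun hjl =>
          hbetween j haj hjl (hdesc.mem_of_le_of_le haj.le hjl.le hai hli)
        exact List.mem_cons_of_mem _ (ih hq hlj)

theorem IsPathFromTo.eq_of_forall_not_mem {p : List (V n t)} {l m : Fin n}
    (hp : IsPathFromTo D p l m) (hm : ∀ k, ¬ D.mem k m) : l = m := by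
  rcases hp.eq_or_exists_ctr with ⟨-, he⟩ | ⟨a, q, -, -, hq⟩
  · exact (edge_src_snk_iff.mp he).1
  · obtain ⟨k, -, hk⟩ := hq.exists_le_mem
    exact absurd hk (hm k)

theorem IsPathFromTo.ctr_mem_of_edge {p : List (V n t)} {l m : Fin n} {a : Fin t}
    (hp : IsPathFromTo D p l m) (ha : Edge D (V.src l) (V.ctr a)) : V.ctr a ∈ p := by
  obtain ⟨hal, hafirst⟩ := edge_src_ctr_iff.mp ha
  rcases hp.eq_or_exists_ctr with ⟨-, he⟩ | ⟨b, q, rfl, hb, hq⟩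
  · exact absurd hal ((edge_src_snk_iff.mp he).2 a)
  · obtain ⟨hbl, hbfirst⟩ := edge_src_ctr_iff.mp hb
    obtain rfl : b = a :=
      le_antisymm (le_of_not_gt fun h => hbfirst a h hal) (le_of_not_gt fun h => hafirst b h hbl)
    exact List.mem_cons_of_mem _ hq.start_mem

theorem Descending.exists_mem_of_isPathFromTo (hdesc : Descending D) {l₁ l₂ m₁ m₂ : Fin n}
    {p₁ p₂ r : List (V n t)} (hl : l₁ < l₂) (hp₁ : IsPathFromTo D p₁ l₁ m₁)
    (hp₂ : IsPathFromTo D p₂ l₂ m₂) (hr : IsPathFromTo D r l₁ m₂) : ∃ x, x ∈ p₁ ∧ x ∈ p₂ := by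
  rcases hr.eq_or_exists_ctr with ⟨-, he⟩ | ⟨a₁, r', -, he₁, hr'⟩
  · obtain ⟨rfl, hnot⟩ := edge_src_snk_iff.mp he
    exact absurd (hp₂.eq_of_forall_not_mem hnot) hl.ne'
  obtain ⟨k, hak, hk⟩ := hr'.exists_le_mem
  refine ⟨V.ctr a₁, hp₁.ctr_mem_of_edge he₁, ?_⟩
  rcases hp₂.eq_or_exists_ctr with ⟨-, he⟩ | ⟨a₂, q₂, rfl, he₂, hq₂⟩
  · obtain ⟨rfl, hnot⟩ := edge_src_snk_iff.mp he
    exact absurd hk (hnot k)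
  obtain ⟨ha₁, -⟩ := edge_src_ctr_iff.mp he₁
  obtain ⟨ha₂, hfirst⟩ := edge_src_ctr_iff.mp he₂
  exact List.mem_cons_of_mem _
    (hdesc.ctr_mem_of_pathIn hq₂ (hdesc.le_of_lt_of_mem hl ha₁ ha₂ hfirst) hak hk)

end Network

/-- Lemma on intersections in descending star networks. -/
theorem statement1 (n t : ℕ) (D : IntervalData n t) (hdesc : Descending D)
    (l1 l2 m1 m2 : Fin n) (h12 : l1 < l2) (p1 p2 : List (V n t))
    (hp1 : IsPathFromTo D p1 l1 m1) (hp2 : IsPathFromTo D p2 l2 m2) :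
    (∃ x, x ∈ p1 ∧ x ∈ p2) ↔ ∃ p, IsPathFromTo D p l1 m2 :=
  ⟨fun ⟨_, hx1, hx2⟩ => PathIn.splice hp1 hx1 hp2 hx2,
    fun ⟨_, hr⟩ => hdesc.exists_mem_of_isPathFromTo h12 hp1 hp2 hr⟩

end

end ZigZag
end

section
/- Let F be the zig-zag network of a concatenation G_{[c_1,d_1]}∘⋯∘G_{[c_t,d_t]} of star networks of order n, and for each i let π_i be the unique directed path in F from source i to sink i. Then for 1 ≤ i < j ≤ n, the paths π_i and π_j are vertex-disjoint if and only if no interval [c_k,d_k] contains both i and j. Consequently, the partial order P(F) depends only on the set of intervals {[c_1,d_1],…,[c_t,d_t]} and not on their order in the concatenation. -/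
namespace ZigZag

noncomputable section

attribute [local instance] Classical.propDecidable

variable {n t : ℕ}

/-! A path from source `i` to sink `i` enters the stars at an interval containing `i` and
leaves them at one. By the triple-overlap condition two consecutive steps `k → l → m` between
central vertices move the left endpoints in the same direction, and by non-nesting the right
endpoints move with them. So once a path steps into a star whose interval misses `i`, it drifts
monotonically away from `i` and never reaches sink `i`: every central vertex of `π_i` lies on an
interval containing `i`. Conversely the stars containing `i`, taken in order, form a path from
source `i` to sink `i`. As distinct paths share no source and no sink, `π_i` and `π_j` meet exactly
when some interval contains both `i` and `j`, a condition on the set of intervals alone. -/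

open Relation

theorem reflTransGen_of_consecutive {α : Type*} [LinearOrder α] [Finite α] {S : α → Prop}
    {r : α → α → Prop} (hr : ∀ a b, a < b → S a → S b → (∀ m, a < m → m < b → ¬ S m) → r a b)
    {a b : α} (ha : S a) (hb : S b) (hab : a ≤ b) : ReflTransGen r a b := by
  induction b using WellFoundedLT.induction with
  | _ b ih =>
    rcases hab.eq_or_lt with rfl | hab
    · rfl
    obtain ⟨m, ⟨hm, hmb⟩, hmax⟩ :=
      Set.exists_max_image {m | S m ∧ m < b} id (Set.toFinite _) ⟨a, ha, hab⟩
    refine (ih m hmb hm (hmax a ⟨ha, hab⟩)).tail (hr m b hmb hm hb fun m' hm' hm'b hm'S => ?_)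
    exact (hmax m' ⟨hm'S, hm'b⟩).not_gt hm'

variable {x y z : V n t}

section PathIn

variable {E : V n t → V n t → Prop} {p : List (V n t)}

theorem PathIn.cons (hp : PathIn E p y z) (h : E x y) : PathIn E (x :: p) x z := by
  obtain ⟨hne, hchain, hhead, hlast⟩ := hp
  cases p with
  | nil => exact absurd rfl hne
  | cons a q =>
    obtain rfl : a = y := by simpa using hhead
    exact ⟨List.cons_ne_nil _ _, hchain.cons_cons h, rfl, by rwa [List.getLast?_cons_cons]⟩

theorem PathIn.reflTransGen_of_mem (hp : PathIn E p x z) (hy : y ∈ p) :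
    ReflTransGen E x y ∧ ReflTransGen E y z := by
  obtain ⟨hne, hchain, hhead, hlast⟩ := hp
  have hx : p.head hne = x := by simpa [List.head?_eq_some_head hne] using hhead
  have hz : p.getLast hne = z := by simpa [List.getLast?_eq_some_getLast hne] using hlast
  exact ⟨List.IsChain.induction (ReflTransGen E x ·) p hchain (fun _ _ h h' => h'.tail h)
      (fun _ => hx ▸ .refl) y hy,
    List.IsChain.backwards_induction (ReflTransGen E · z) p hchain (fun _ _ h h' => h'.head h)
      (fun _ => hz ▸ .refl) y hy⟩

theorem exists_pathIn_mem (hxy : ReflTransGen E x y) (hyz : ReflTransGen E y z) :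
    ∃ p, PathIn E p x z ∧ y ∈ p := by
  induction hxy using Relation.ReflTransGen.head_induction_on with
  | refl =>
    obtain ⟨l, hchain, hlast⟩ := List.exists_isChain_cons_of_relationReflTransGen hyz
    exact ⟨y :: l, ⟨List.cons_ne_nil _ _, hchain, rfl, by
      rw [List.getLast?_eq_some_getLast (List.cons_ne_nil _ _), hlast]⟩, List.mem_cons_self⟩
  | head h _ ih =>
    obtain ⟨p, hp, hy⟩ := ih
    exact ⟨_, hp.cons h, List.mem_cons_of_mem _ hy⟩

end PathIn

variable {D : IntervalData n t} {i a : Fin n} {k l m : Fin t}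

theorem IntervalData.d_lt_d_of_c_le (D : IntervalData n t) (hkl : k ≠ l) (h : D.c k ≤ D.c l) :
    D.d k < D.d l :=
  lt_of_not_ge fun h' => D.nonnest k l hkl ⟨h, h'⟩

theorem Edge.lt_and_intersects (h : Edge D (V.ctr k) (V.ctr l)) : k < l ∧ Intersects D k l := by
  cases h with
  | ctrCtr _ _ _ hkl hk hl _ => exact ⟨hkl, hk.1.trans hl.2, hl.1.trans hk.2⟩

theorem eq_src_of_reflTransGen (h : ReflTransGen (Edge D) x (V.src a)) : x = V.src a := by
  rcases h.cases_tail with h | ⟨_, _, h⟩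
  · exact h.symm
  · cases h

theorem eq_snk_of_reflTransGen (h : ReflTransGen (Edge D) (V.snk a) y) : y = V.snk a := by
  rcases h.cases_head with h | ⟨_, h, _⟩
  · exact h.symm
  · cases h

def MovesAway (D : IntervalData n t) (i : Fin n) (k l : Fin t) : Prop :=
  (D.c k < D.c l ∧ i < D.c l) ∨ (D.c l < D.c k ∧ D.d l < i)

theorem movesAway_of_not_mem (hkl : Edge D (V.ctr k) (V.ctr l)) (hk : D.mem k i)
    (hl : ¬ D.mem l i) : MovesAway D i k l := by
  rcases not_and_or.1 hl with hi | hi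
  · exact Or.inl ⟨hk.1.trans_lt (not_le.1 hi), not_le.1 hi⟩
  · refine Or.inr ⟨lt_of_not_ge fun hc => hi ?_, not_le.1 hi⟩
    exact hk.2.trans (D.d_lt_d_of_c_le hkl.lt_and_intersects.1.ne hc).le

theorem MovesAway.next (h : MovesAway D i k l) (hkl : Edge D (V.ctr k) (V.ctr l))
    (hlm : Edge D (V.ctr l) (V.ctr m)) : MovesAway D i l m := by
  obtain ⟨hkl, hkl'⟩ := hkl.lt_and_intersects
  obtain ⟨hlm, hlm'⟩ := hlm.lt_and_intersects
  rcases D.tripleOverlap k l m hkl hlm hkl' hlm' with ⟨hkl_c, hlm_c⟩ | ⟨hml_c, hlk_c⟩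
  · rcases h with ⟨_, hi⟩ | ⟨hlk_c, _⟩
    · exact Or.inl ⟨hlm_c, hi.trans hlm_c⟩
    · exact absurd hkl_c hlk_c.asymm
  · rcases h with ⟨hkl_c, _⟩ | ⟨_, hi⟩
    · exact absurd hkl_c hlk_c.asymm
    · exact Or.inr ⟨hml_c, (D.d_lt_d_of_c_le hlm.ne' hml_c.le).trans hi⟩

theorem MovesAway.not_reflTransGen_snk (h : MovesAway D i k l)
    (hkl : Edge D (V.ctr k) (V.ctr l)) : ¬ ReflTransGen (Edge D) (V.ctr l) (V.snk i) := by
  suffices ∀ x, ReflTransGen (Edge D) x (V.snk i) →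
      ∀ k l, x = V.ctr l → Edge D (V.ctr k) (V.ctr l) → MovesAway D i k l → False from
    fun hreach => this _ hreach k l rfl hkl h
  intro x hx
  induction hx using Relation.ReflTransGen.head_induction_on with
  | refl => rintro _ _ ⟨⟩
  | @head x y hxy hyz ih =>
    rintro k l rfl hkl h
    cases y with
    | src _ => cases hxy
    | snk a =>
      obtain rfl : i = a := V.snk.inj (eq_snk_of_reflTransGen hyz)
      cases hxy with
      | ctrSnk _ _ hi _ =>
        rcases h with ⟨_, hlt⟩ | ⟨_, hlt⟩
        · exact hlt.not_ge hi.1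
        · exact hlt.not_ge hi.2
    | ctr m => exact ih l m rfl hxy (h.next hkl hxy)

theorem mem_of_reflTransGen (h₁ : ReflTransGen (Edge D) (V.src i) (V.ctr m))
    (h₂ : ReflTransGen (Edge D) (V.ctr m) (V.snk i)) : D.mem m i := by
  suffices ∀ x, ReflTransGen (Edge D) (V.src i) x →
      ∀ m, x = V.ctr m → ReflTransGen (Edge D) (V.ctr m) (V.snk i) → D.mem m i from
    this _ h₁ m rfl h₂
  intro x hx
  induction hx with
  | refl => rintro _ ⟨⟩
  | @tail y x hy hyx ih =>
    rintro m rfl hm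
    cases y with
    | src j =>
      obtain rfl : i = j := V.src.inj (eq_src_of_reflTransGen hy)
      cases hyx with
      | srcCtr _ _ hi _ => exact hi
    | snk _ => cases hyx
    | ctr k =>
      have hk := ih k rfl (hm.head hyx)
      by_contra hmi
      exact (movesAway_of_not_mem hyx hk hmi).not_reflTransGen_snk hyx hm

theorem exists_isPathFromTo_mem_ctr (hk : D.mem k i) :
    ∃ p, IsPathFromTo D p i i ∧ V.ctr k ∈ p := by
  have hfin : {m | D.mem m i}.Finite := Set.toFinite _
  obtain ⟨k₀, hk₀, hmin⟩ := Set.exists_min_image _ id hfin ⟨k, hk⟩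
  obtain ⟨k₁, hk₁, hmax⟩ := Set.exists_max_image _ id hfin ⟨k, hk⟩
  have hstars : ∀ {a b}, D.mem a i → D.mem b i → a ≤ b →
      ReflTransGen (Edge D) (V.ctr a) (V.ctr b) := fun ha hb hab =>
    (reflTransGen_of_consecutive (Edge.ctrCtr i) ha hb hab).lift V.ctr fun _ _ h => h
  refine exists_pathIn_mem ?_ ?_
  · exact .head (Edge.srcCtr i k₀ hk₀ fun l hl hli => (hmin l hli).not_gt hl)
      (hstars hk₀ hk (hmin k hk))
  · exact (hstars hk hk₁ (hmax k hk)).tail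
      (Edge.ctrSnk i k₁ hk₁ fun l hl hli => (hmax l hli).not_gt hl)

theorem pathsIntersect_iff (D : IntervalData n t) {i j : Fin n} (hij : i ≠ j) :
    PathsIntersect D i j ↔ ∃ k, D.mem k i ∧ D.mem k j := by
  constructor
  · rintro ⟨p, q, hp, hq, x, hxp, hxq⟩
    obtain ⟨hp₁, hp₂⟩ := PathIn.reflTransGen_of_mem hp hxp
    obtain ⟨hq₁, hq₂⟩ := PathIn.reflTransGen_of_mem hq hxq
    cases x with
    | src a =>
      exact (hij <| V.src.inj ((eq_src_of_reflTransGen hp₁).trans (eq_src_of_reflTransGen hq₁).symm)).elim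
    | snk a =>
      exact (hij <| V.snk.inj ((eq_snk_of_reflTransGen hp₂).trans (eq_snk_of_reflTransGen hq₂).symm)).elim
    | ctr k => exact ⟨k, mem_of_reflTransGen hp₁ hp₂, mem_of_reflTransGen hq₁ hq₂⟩
  · rintro ⟨k, hki, hkj⟩
    obtain ⟨p, hp, hkp⟩ := exists_isPathFromTo_mem_ctr hki
    obtain ⟨q, hq, hkq⟩ := exists_isPathFromTo_mem_ctr hkj
    exact ⟨p, q, hp, hq, _, hkp, hkq⟩

theorem exists_mem_mem_of_forall_exists_interval_eq {t' : ℕ} {D' : IntervalData n t'}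
    {i j : Fin n} (h : ∀ k : Fin t, ∃ k' : Fin t', D'.c k' = D.c k ∧ D'.d k' = D.d k) :
    (∃ k, D.mem k i ∧ D.mem k j) → ∃ k', D'.mem k' i ∧ D'.mem k' j := by
  rintro ⟨k, hk⟩
  obtain ⟨k', hc, hd⟩ := h k
  exact ⟨k', by simpa only [IntervalData.mem, hc, hd] using hk⟩

/-- in a zig-zag network, the paths `π_i`, `π_j` (for `i < j`)
are vertex-disjoint iff no interval of the concatenation contains both `i` and
`j`; consequently `P(F)` depends only on the set of intervals. -/
theorem statement4 (n t : ℕ) (D : IntervalData n t) :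
    (∀ i j : Fin n, i < j →
      ((¬ PathsIntersect D i j) ↔ ∀ k : Fin t, ¬ (D.mem k i ∧ D.mem k j))) ∧
    (∀ t' : ℕ, ∀ D' : IntervalData n t',
      ((∀ k : Fin t, ∃ k' : Fin t', D'.c k' = D.c k ∧ D'.d k' = D.d k) ∧
       (∀ k' : Fin t', ∃ k : Fin t, D.c k = D'.c k' ∧ D.d k = D'.d k')) →
      ∀ i j : Fin n, PRel D i j ↔ PRel D' i j) := by
  refine ⟨fun i j hij => by rw [pathsIntersect_iff D hij.ne, not_exists], ?_⟩
  rintro t' D' ⟨hDD', hD'D⟩ i j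
  refine and_congr_right fun hij => not_congr ?_
  rw [pathsIntersect_iff D hij.ne, pathsIntersect_iff D' hij.ne]
  exact ⟨exists_mem_mem_of_forall_exists_interval_eq hDD',
    exists_mem_mem_of_forall_exists_interval_eq hD'D⟩

end

end ZigZag
end

section
/- Let w ∈ S_n avoid the patterns 3412 and 4231, and let λ be a partition of n having α_i parts equal to i for each i; set z_λ = ∏_i i^{α_i}·α_i!. Then the number of cylindrical F_w-tableaux of shape λ equals z_λ times the number of permutations v ∈ S_n of cycle type λ such that some path family of type v covers F_w (equivalently, such that v ≤ w in Bruhat order). -/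
/-!
A cylindrical tableau of shape `λ` consists of its type `v`, the unique covering family of
type `v` (which exists iff `v ≤ w`), and a filling of the diagram whose rows are the cycles of `v`.
Read cell by cell, such fillings are exactly the bijections from the cells of `λ` to `[n]` that
conjugate the permutation `σ_λ` rotating every row into `v`. They exist iff `v` has cycle type `λ`
(both cycle types are read off from the minimal periods of the points), and then they form a
torsor under the centralizer of `v`, whose order is `z_λ`.
-/

namespace ZigZag

noncomputable section

attribute [local instance] Classical.propDecidable

variable {n t : ℕ}

open Equiv Function Finset

section MinimalPeriod

variable {α β : Type*}

theorem minimalPeriod_eq_of_semiconj {f : β → β} {g : α → α} {h : β → α} (hh : Injective h)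
    (hs : Semiconj h f g) (x : β) : minimalPeriod g (h x) = minimalPeriod f x := by
  rw [minimalPeriod_eq_minimalPeriod_iff]
  intro k
  rw [IsPeriodicPt, IsFixedPt, ← hs.iterate_right k x, hh.eq_iff]
  rfl

theorem minimalPeriod_eq_card_of_isCycleOn {f : Perm α} {s : Finset α} (hf : f.IsCycleOn s)
    {a : α} (ha : a ∈ s) : minimalPeriod f a = #s := by
  refine Nat.dvd_antisymm ?_ ?_
  · apply IsPeriodicPt.minimalPeriod_dvd
    rw [IsPeriodicPt, IsFixedPt, ← Perm.coe_pow]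
    exact hf.pow_card_apply ha
  · rw [← hf.pow_apply_eq ha, Perm.coe_pow]
    exact iterate_minimalPeriod

variable [Fintype α] [DecidableEq α]

theorem minimalPeriod_eq_card_support_cycleOf {v : Perm α} {x : α} (hx : x ∈ v.support) :
    minimalPeriod v x = #(v.cycleOf x).support :=
  minimalPeriod_eq_card_of_isCycleOn (v.isCycleOn_support_cycleOf x)
    (Perm.mem_support_cycleOf_iff.2 ⟨Perm.SameCycle.refl _ _, hx⟩)

theorem minimalPeriod_eq_one_iff_notMem_support {v : Perm α} {x : α} :
    minimalPeriod v x = 1 ↔ x ∉ v.support := by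
  rw [minimalPeriod_eq_one_iff_isFixedPt, Perm.notMem_support, IsFixedPt]

theorem minimalPeriod_pos (v : Perm α) (x : α) : 0 < minimalPeriod v x := by
  by_cases hx : x ∈ v.support
  · rw [minimalPeriod_eq_card_support_cycleOf hx, Finset.card_pos]
    exact ⟨x, Perm.mem_support_cycleOf_iff.2 ⟨Perm.SameCycle.refl _ _, hx⟩⟩
  · rw [minimalPeriod_eq_one_iff_notMem_support.2 hx]
    exact one_pos

theorem filter_minimalPeriod_eq_support {v : Perm α} {k : ℕ} (hk : 2 ≤ k) {c : Perm α}
    (hc : c ∈ v.cycleFactorsFinset) (hck : #c.support = k) :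
    ({x | minimalPeriod v x = k ∧ v.cycleOf x = c} : Finset α) = c.support := by
  ext x
  simp only [mem_filter, mem_univ, true_and]
  constructor
  · rintro ⟨hx, rfl⟩
    have hxs : x ∈ v.support := by
      rw [← minimalPeriod_eq_one_iff_notMem_support.not_left]; omega
    exact Perm.mem_support_cycleOf_iff.2 ⟨Perm.SameCycle.refl _ _, hxs⟩
  · intro hx
    have hcx := Perm.cycle_is_cycleOf hx hc
    refine ⟨?_, hcx.symm⟩
    rw [minimalPeriod_eq_card_support_cycleOf (Perm.mem_cycleFactorsFinset_support_le hc hx),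
      ← hcx, hck]

theorem card_filter_minimalPeriod_eq (v : Perm α) (k : ℕ) :
    #{x | minimalPeriod v x = k} = k * v.partition.parts.count k := by
  have hcount1 : v.cycleType.count 1 = 0 :=
    Multiset.count_eq_zero.2 fun h => by linarith [Perm.two_le_of_mem_cycleType h]
  rcases lt_trichotomy k 1 with hk | rfl | hk
  · obtain rfl : k = 0 := by omega
    simp [(minimalPeriod_pos v _).ne']
  · have hfix : ({x | minimalPeriod v x = 1} : Finset α) = v.supportᶜ := by
      ext x; simp [IsFixedPt]
    rw [hfix, card_compl, one_mul, Perm.parts_partition, Multiset.count_add,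
      Multiset.count_replicate_self, hcount1, zero_add]
  · set T := v.cycleFactorsFinset.filter fun c => #c.support = k
    have hmaps : ∀ x ∈ ({x | minimalPeriod v x = k} : Finset α), v.cycleOf x ∈ T := by
      intro x hx
      simp only [mem_filter, mem_univ, true_and] at hx
      have hxs : x ∈ v.support := by
        rw [← minimalPeriod_eq_one_iff_notMem_support.not_left]; omega
      exact mem_filter.2 ⟨Perm.cycleOf_mem_cycleFactorsFinset_iff.2 hxs,
        by rw [← minimalPeriod_eq_card_support_cycleOf hxs, hx]⟩
    have hfib : ∀ c ∈ T, #{x ∈ {x | minimalPeriod v x = k} | v.cycleOf x = c} = k := by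
      intro c hc
      obtain ⟨hc, hck⟩ := mem_filter.1 hc
      rw [filter_filter, filter_minimalPeriod_eq_support (by omega) hc hck, hck]
    rw [card_eq_sum_card_fiberwise hmaps, sum_congr rfl hfib, sum_const, smul_eq_mul, mul_comm,
      Perm.parts_partition, Multiset.count_add, Multiset.count_replicate,
      if_neg (by omega), add_zero, Perm.cycleType_def, Multiset.count_map, card_def,
      filter_val]
    simp_rw [Function.comp_apply, eq_comm (a := k)]

theorem parts_partition_eq_of_card_filter_minimalPeriod {v : Perm α} {M : Multiset ℕ}
    (hM : ∀ k ∈ M, 0 < k) (h : ∀ k, #{x | minimalPeriod v x = k} = k * M.count k) :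
    v.partition.parts = M := by
  ext k
  rcases Nat.eq_zero_or_pos k with rfl | hk
  · rw [Multiset.count_eq_zero.2 fun h => (v.partition.parts_pos h).ne' rfl,
      Multiset.count_eq_zero.2 fun h => (hM 0 h).ne' rfl]
  · exact Nat.eq_of_mul_eq_mul_left hk ((card_filter_minimalPeriod_eq v k).symm.trans (h k))

end MinimalPeriod

theorem minimalPeriod_finRotate {m : ℕ} (i : Fin m) : minimalPeriod (finRotate m) i = m := by
  match m, i with
  | 1, i => exact minimalPeriod_eq_one_of_subsingleton
  | m + 2, i =>
    rw [minimalPeriod_eq_card_of_isCycleOn (s := univ) (by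
      simpa [support_finRotate] using (isCycle_finRotate (n := m)).isCycleOn) (mem_univ i),
      card_univ, Fintype.card_fin]

theorem ofFn_rotate_one {β : Type*} {m : ℕ} (g : Fin m → β) :
    (List.ofFn g).rotate 1 = List.ofFn (g ∘ finRotate m) := by
  refine List.ext_getElem (by simp) fun i h₁ h₂ => ?_
  rcases m with _ | m
  · simp at h₂
  · simp only [List.getElem_rotate, List.getElem_ofFn, comp_apply, finRotate_apply,
      List.length_ofFn]
    congr 1
    ext
    simp [Fin.val_add]

theorem map_ofFn_eq_rotate_one_iff {β : Type*} {m : ℕ} (g : Fin m → β) (v : β → β) :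
    (List.ofFn g).map v = (List.ofFn g).rotate 1 ↔ Semiconj g (finRotate m) v := by
  rw [List.map_ofFn, ofFn_rotate_one, List.ofFn_inj, funext_iff]
  exact ⟨fun h i => (h i).symm, fun h i => (h i).symm⟩

section Shape

variable (lam : List ℕ)

abbrev Cell : Type := Σ j : Fin lam.length, Fin (lam.get j)

def rowRotation : Perm (Cell lam) := Equiv.sigmaCongrRight fun j => finRotate (lam.get j)

theorem card_cell : Fintype.card (Cell lam) = lam.sum := by
  simp [Fintype.card_sigma]

theorem minimalPeriod_rowRotation (c : Cell lam) :
    minimalPeriod (rowRotation lam) c = lam.get c.1 := by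
  rw [← minimalPeriod_finRotate c.2]
  exact minimalPeriod_eq_of_semiconj (h := Sigma.mk c.1) (g := rowRotation lam) sigma_mk_injective
    (fun _ => rfl) c.2

theorem card_filter_minimalPeriod_rowRotation (k : ℕ) :
    #{c | minimalPeriod (rowRotation lam) c = k} = k * lam.count k := by
  have hcells : ({c | minimalPeriod (rowRotation lam) c = k} : Finset (Cell lam)) =
      ({j | lam.get j = k} : Finset (Fin lam.length)).sigma fun _ => univ := by
    ext c
    simp [minimalPeriod_rowRotation]
  rw [hcells, card_sigma, sum_congr rfl fun j hj => by rw [card_univ, Fintype.card_fin,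
    (mem_filter.1 hj).2], sum_const, smul_eq_mul, mul_comm]
  exact congrArg (k * ·) (Fin.card_filter_univ_eq_vector_get_eq_count k ⟨lam, rfl⟩)

end Shape

section Conjugation

variable {α β : Type*}

theorem card_semiconj_equiv {σ : Perm β} {v : Perm α} {e₀ : β ≃ α}
    (h₀ : Semiconj e₀ σ v) :
    Nat.card {e : β ≃ α // Semiconj e σ v} = Nat.card (Subgroup.centralizer {v}) := by
  refine Nat.card_congr
    { toFun := fun e => ⟨e₀.symm.trans e.1, Subgroup.mem_centralizer_singleton_iff.2 ?_⟩
      invFun := fun g => ⟨e₀.trans g.1, fun c => ?_⟩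
      left_inv := fun e => Subtype.ext (Equiv.ext fun _ => by simp)
      right_inv := fun g => Subtype.ext (Equiv.ext fun _ => by simp) }
  · ext x
    have hx : e₀.symm (v x) = σ (e₀.symm x) := by
      rw [Equiv.symm_apply_eq, h₀, Equiv.apply_symm_apply]
    simp [hx, e.2 _]
  · have hg : g.1 * v = v * g.1 := Subgroup.mem_centralizer_singleton_iff.1 g.2
    simp only [Equiv.trans_apply, h₀ c]
    exact DFunLike.congr_fun hg _

variable [Fintype α] [DecidableEq α] {lam : List ℕ}

theorem parts_partition_permCongr_rowRotation (hpos : ∀ k ∈ lam, 0 < k) (e : Cell lam ≃ α) :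
    (e.permCongr (rowRotation lam)).partition.parts = lam := by
  refine parts_partition_eq_of_card_filter_minimalPeriod hpos fun k => ?_
  rw [Multiset.coe_count, ← card_filter_minimalPeriod_rowRotation]
  refine Finset.card_equiv e.symm fun x => ?_
  have hsemi : Semiconj e (rowRotation lam) (e.permCongr (rowRotation lam)) := fun c => by
    simp [Equiv.permCongr_apply]
  simp only [mem_filter, mem_univ, true_and]
  rw [← minimalPeriod_eq_of_semiconj e.injective hsemi, Equiv.apply_symm_apply]

theorem nonempty_semiconj_rowRotation_iff (hpos : ∀ k ∈ lam, 0 < k)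
    (hcard : lam.sum = Fintype.card α) (v : Perm α) :
    Nonempty {e : Cell lam ≃ α // Semiconj e (rowRotation lam) v} ↔ v.partition.parts = lam := by
  constructor
  · rintro ⟨e, he⟩
    have hv : e.permCongr (rowRotation lam) = v := by
      ext x
      rw [Equiv.permCongr_apply, he, Equiv.apply_symm_apply]
    rw [← hv, parts_partition_permCongr_rowRotation hpos]
  · intro hv
    let e₀ : Cell lam ≃ α := Fintype.equivOfCardEq (by rw [card_cell, hcard])
    have hconj : IsConj (e₀.permCongr (rowRotation lam)) v := by
      rw [Perm.partition_eq_of_isConj, Nat.Partition.ext_iff, hv,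
        parts_partition_permCongr_rowRotation hpos]
    obtain ⟨g, hg⟩ := isConj_iff.1 hconj
    refine ⟨⟨e₀.trans g, fun c => ?_⟩⟩
    simp [← hg, Equiv.permCongr_apply]

end Conjugation

theorem prod_factorial_count_add_replicate_one {M : Multiset ℕ} (hM : 1 ∉ M) (f : ℕ) :
    ∏ i ∈ (M + Multiset.replicate f 1).toFinset, ((M + Multiset.replicate f 1).count i).factorial =
      f.factorial * ∏ i ∈ M.toFinset, (M.count i).factorial := by
  have h1 : 1 ∉ M.toFinset := by rwa [Multiset.mem_toFinset]
  rw [prod_subset (s₂ := insert 1 M.toFinset) (fun i hi => ?_) (fun i _ hi => ?_),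
    prod_insert h1]
  · congr 1
    · simp [Multiset.count_eq_zero.2 hM]
    · refine prod_congr rfl fun i hi => ?_
      have : i ≠ 1 := fun h => h1 (h ▸ hi)
      simp [Multiset.count_replicate, this.symm]
  · simp only [Multiset.toFinset_add, mem_union, Multiset.mem_toFinset] at hi
    rcases hi with hi | hi
    · exact mem_insert_of_mem (Multiset.mem_toFinset.2 hi)
    · exact mem_insert.2 (Or.inl (Multiset.eq_of_mem_replicate hi))
  · rw [Multiset.count_eq_zero.2 (by rwa [Multiset.mem_toFinset] at hi), Nat.factorial_zero]

theorem zPart_eq_card_centralizer {α : Type*} [Fintype α] [DecidableEq α] {v : Perm α}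
    {lam : List ℕ} (h : v.partition.parts = lam) :
    zPart lam = Nat.card (Subgroup.centralizer {v}) := by
  have hlam : zPart lam = v.partition.parts.prod *
      ∏ i ∈ v.partition.parts.toFinset, (v.partition.parts.count i).factorial := by
    rw [h, zPart, Multiset.prod_coe, List.toFinset_coe]
    simp only [Multiset.coe_count]
  have h1 : 1 ∉ v.cycleType := fun h1 => by linarith [Perm.two_le_of_mem_cycleType h1]
  rw [hlam, Perm.nat_card_centralizer, Perm.parts_partition,
    prod_factorial_count_add_replicate_one h1, Multiset.prod_add, Multiset.prod_replicate,
    one_pow, mul_one, Perm.sum_cycleType]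
  ring

section Filling

variable {α : Type*} {lam : List ℕ}

def rowsOf (f : Cell lam → α) : List (List α) :=
  List.ofFn fun j => List.ofFn fun i => f ⟨j, i⟩

theorem map_length_rowsOf (f : Cell lam → α) : (rowsOf f).map List.length = lam := by
  simp [rowsOf, List.map_ofFn, comp_def]

theorem rowsOf_injective : Injective (rowsOf : (Cell lam → α) → List (List α)) := by
  intro f g h
  funext c
  have := congrFun (List.ofFn_injective h) c.1
  exact congrFun (List.ofFn_injective this) c.2

theorem exists_rowsOf_eq {R : List (List α)} (hR : R.map List.length = lam) :
    ∃ f : Cell lam → α, rowsOf f = R := by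
  subst hR
  refine ⟨fun c => (R[c.1.1]'(by simpa using c.1.2))[c.2.1]'(by simpa using c.2.2), ?_⟩
  refine List.ext_getElem (by simp [rowsOf]) fun j h₁ h₂ => List.ext_getElem (by simp [rowsOf]) ?_
  intro i h₃ h₄
  simp [rowsOf]

theorem mem_flatten_rowsOf (f : Cell lam → α) (x : α) :
    x ∈ (rowsOf f).flatten ↔ x ∈ Set.range f := by
  simp [rowsOf, List.mem_flatten, List.mem_ofFn]

theorem nodup_flatten_rowsOf {f : Cell lam → α} (hf : Injective f) : (rowsOf f).flatten.Nodup := by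
  refine List.nodup_flatten.2 ⟨fun r hr => ?_, List.pairwise_ofFn.2 fun j j' hjj' x hx hx' => ?_⟩
  · obtain ⟨j, rfl⟩ := List.mem_ofFn.1 hr
    exact List.nodup_ofFn.2 (hf.comp sigma_mk_injective)
  · obtain ⟨i, rfl⟩ := List.mem_ofFn.1 hx
    obtain ⟨i', hi'⟩ := List.mem_ofFn.1 hx'
    exact hjj'.ne (congrArg Sigma.fst (hf hi')).symm

theorem forall_map_eq_rotate_rowsOf_iff (f : Cell lam → α) (v : α → α) :
    (∀ r ∈ rowsOf f, r.map v = r.rotate 1) ↔ Semiconj f (rowRotation lam) v := by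
  simp only [rowsOf, List.forall_mem_ofFn_iff, map_ofFn_eq_rotate_one_iff]
  exact ⟨fun h c => h c.1 c.2, fun h j i => h ⟨j, i⟩⟩

def CyclicFilling (v : Perm α) (lam : List ℕ) :=
  {rows : List (List α) // rows.map List.length = lam ∧ rows.flatten.Nodup ∧
    (∀ x, x ∈ rows.flatten) ∧ ∀ r ∈ rows, r.map v = r.rotate 1}

variable [Fintype α]

instance (v : Perm α) : Finite (CyclicFilling v lam) :=
  Finite.of_injective (fun R => (exists_rowsOf_eq R.2.1).choose) fun R R' h => Subtype.ext <|
    (exists_rowsOf_eq R.2.1).choose_spec.symm.trans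
      ((congrArg rowsOf h).trans (exists_rowsOf_eq R'.2.1).choose_spec)

def semiconjEquivCyclicFilling (hcard : lam.sum = Fintype.card α) (v : Perm α) :
    {e : Cell lam ≃ α // Semiconj e (rowRotation lam) v} ≃ CyclicFilling v lam := by
  refine Equiv.ofBijective
    (fun e => ⟨rowsOf e.1, map_length_rowsOf _, nodup_flatten_rowsOf e.1.injective,
      fun x => (mem_flatten_rowsOf _ x).2 (e.1.surjective x),
      (forall_map_eq_rotate_rowsOf_iff _ _).2 e.2⟩)
    ⟨fun e e' h => ?_, fun R => ?_⟩
  · exact Subtype.ext (Equiv.coe_fn_injective (rowsOf_injective (congrArg Subtype.val h)))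
  · obtain ⟨f, hf⟩ := exists_rowsOf_eq R.2.1
    have hsurj : Surjective f := fun x => (mem_flatten_rowsOf f x).1 (hf ▸ R.2.2.2.1 x)
    have hbij : Bijective f :=
      (Fintype.bijective_iff_surjective_and_card f).2 ⟨hsurj, by rw [card_cell, hcard]⟩
    exact ⟨⟨Equiv.ofBijective f hbij, (forall_map_eq_rotate_rowsOf_iff f v).1 (hf ▸ R.2.2.2.2)⟩,
      Subtype.ext hf⟩

variable [DecidableEq α]

theorem parts_partition_of_cyclicFilling (hpos : ∀ k ∈ lam, 0 < k)
    (hcard : lam.sum = Fintype.card α) {v : Perm α} (R : CyclicFilling v lam) :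
    v.partition.parts = lam :=
  (nonempty_semiconj_rowRotation_iff hpos hcard v).1 ⟨(semiconjEquivCyclicFilling hcard v).symm R⟩

theorem card_cyclicFilling (hpos : ∀ k ∈ lam, 0 < k) (hcard : lam.sum = Fintype.card α)
    {v : Perm α} (hv : v.partition.parts = lam) :
    Nat.card (CyclicFilling v lam) = zPart lam := by
  obtain ⟨e₀⟩ := (nonempty_semiconj_rowRotation_iff hpos hcard v).2 hv
  rw [← Nat.card_congr (semiconjEquivCyclicFilling hcard v), card_semiconj_equiv e₀.2,
    zPart_eq_card_centralizer hv]

end Filling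

theorem fullCycleType_eq_parts_partition {n : ℕ} (v : Perm (Fin n)) :
    fullCycleType v = v.partition.parts := by
  rw [fullCycleType, Perm.parts_partition, Fintype.card_fin]

def cylindricalTableauEquiv {n t : ℕ} {D : IntervalData n t} {w : Perm (Fin n)}
    (hD : Represents D w) {lam : List ℕ} (hpos : ∀ k ∈ lam, 0 < k) (hsum : lam.sum = n) :
    {U : Tableau D lam // U.Cylindrical} ≃
      Σ v : {v : Perm (Fin n) // fullCycleType v = lam ∧ BruhatLE v w},
        CyclicFilling v.1 lam where
  toFun U :=
    let R : CyclicFilling U.1.typ lam := ⟨U.1.rows, U.1.shape, U.1.nodup, U.1.complete, U.2⟩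
    ⟨⟨U.1.typ, by
        rw [fullCycleType_eq_parts_partition]
        exact parts_partition_of_cyclicFilling hpos (by rw [hsum, Fintype.card_fin]) R,
      (hD _).1.1 ⟨U.1.fam, U.1.isFam, U.1.covers⟩⟩, R⟩
  invFun P :=
    ⟨{ fam := ((hD P.1.1).1.2 P.1.2.2).choose
       typ := P.1.1
       isFam := ((hD P.1.1).1.2 P.1.2.2).choose_spec.1
       covers := ((hD P.1.1).1.2 P.1.2.2).choose_spec.2
       rows := P.2.1
       shape := P.2.2.1
       nodup := P.2.2.2.1
       complete := P.2.2.2.2.1 }, P.2.2.2.2.2⟩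
  left_inv := by
    rintro ⟨⟨fam, typ, isFam, covers, rows, shape, nodup, complete⟩, hU⟩
    have hex := (hD typ).1.2 ((hD typ).1.1 ⟨fam, isFam, covers⟩)
    obtain rfl := (hD typ).2 _ _ hex.choose_spec.1 hex.choose_spec.2 isFam covers
    rfl
  right_inv _ := rfl

theorem statement8_general (n t : ℕ) (w : Equiv.Perm (Fin n))
    (D : IntervalData n t) (hD : Represents D w)
    (lam : List ℕ) (hlam : IsPartition lam n) :
    Nat.card {U : Tableau D lam // U.Cylindrical} =
      zPart lam * Nat.card {v : Equiv.Perm (Fin n) //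
        fullCycleType v = (↑lam : Multiset ℕ) ∧ BruhatLE v w} := by
  obtain ⟨-, hpos, hsum⟩ := hlam
  have hcard : lam.sum = Fintype.card (Fin n) := by rw [hsum, Fintype.card_fin]
  have hfill : ∀ v : {v : Perm (Fin n) // fullCycleType v = lam ∧ BruhatLE v w},
      Nat.card (CyclicFilling v.1 lam) = zPart lam := fun v =>
    card_cyclicFilling hpos hcard ((fullCycleType_eq_parts_partition v.1).symm.trans v.2.1)
  rw [Nat.card_congr (cylindricalTableauEquiv hD hpos hsum), Nat.card_sigma,
    sum_congr rfl fun v _ => hfill v, sum_const, card_univ, smul_eq_mul, mul_comm,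
    Fintype.card_eq_nat_card]

/-- the number of cylindrical `F_w`-tableaux of shape `λ`
equals `z_λ` times the number of `v ≤ w` (Bruhat) of cycle type `λ`. -/
theorem statement8 (n t : ℕ) (w : Equiv.Perm (Fin n))
    (h1 : Avoids3412 w) (h2 : Avoids4231 w)
    (D : IntervalData n t) (hD : Represents D w)
    (lam : List ℕ) (hlam : IsPartition lam n) :
    Nat.card {U : Tableau D lam // U.Cylindrical} =
      zPart lam * Nat.card {v : Equiv.Perm (Fin n) //
        fullCycleType v = (↑lam : Multiset ℕ) ∧ BruhatLE v w} :=
  statement8_general n t w D hD lam hlam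

end

end ZigZag
end

section
/- Let P be a unit interval order on {1,…,n}, labeled so that whenever #{z : z <_P x} − #{z : z >_P x} < #{z : z <_P y} − #{z : z >_P y} one has x < y as integers. Let λ = (λ_1,…,λ_r) be a partition of n. Then Σ_κ q^{asc(κ)} = Σ_U q^{inv(U)} in ℤ[q], where: κ ranges over all proper colorings κ : {1,…,n} → {1,…,r} of the incomparability graph of P (κ(x) ≠ κ(y) whenever x ≠ y are incomparable in P) satisfying |κ^{−1}(i)| = λ_{r+1−i} for each i, and asc(κ) = #{(x,y) : x < y, x and y incomparable in P, κ(x) < κ(y)}; and U ranges over all column-strict P-tableaux of shape λ^tr, with inv(U) = #{(x,y) : x and y incomparable in P, x > y, and x lies in a column of U strictly to the left of the column containing y}. -/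
/-!
Listing each color class of `κ` increasingly as a column, class `i` as column `r + 1 - i`, is a
bijection from colorings with the prescribed class sizes onto fillings of shape `λ^tr` with
increasing columns. Since the labeling forces `x <_P y → x < y`, the columns are `P`-chains
exactly when the classes are, i.e. when `κ` is proper. Reversing the order of the columns turns
each ascent `(x, y)` of `κ` into the inversion `(y, x)` of its tableau.
-/

namespace ZigZag

noncomputable section

attribute [local instance] Classical.propDecidable

variable {n t : ℕ}

section Labeling

variable {α : Type*} [LinearOrder α] [Finite α] {r : α → α → Prop}

/-- If `x <_P y`, then `x` has strictly fewer elements below it and strictly more above it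
than `y`. -/
lemma lt_of_rel_of_labeling (hirr : ∀ x, ¬ r x x) (htrans : ∀ x y z, r x y → r y z → r x z)
    (hlabel : ∀ x y : α,
      ((Set.ncard {z | r z x} : ℤ) - (Set.ncard {z | r x z} : ℤ) <
       (Set.ncard {z | r z y} : ℤ) - (Set.ncard {z | r y z} : ℤ)) → x < y)
    {x y : α} (hxy : r x y) : x < y := by
  apply hlabel
  have below : Set.ncard {z | r z x} < Set.ncard {z | r z y} :=
    Set.ncard_lt_ncard ⟨fun z hz => htrans _ _ _ hz hxy, fun hsub => hirr x (hsub hxy)⟩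
  have above : Set.ncard {z | r y z} < Set.ncard {z | r x z} :=
    Set.ncard_lt_ncard ⟨fun z hz => htrans _ _ _ hxy hz, fun hsub => hirr y (hsub hxy)⟩
  omega

end Labeling

lemma Incomp.symm {α : Type*} {r : α → α → Prop} {x y : α} (h : Incomp r x y) :
    Incomp r y x :=
  ⟨h.1.symm, h.2.2, h.2.1⟩

section Columns

variable {α : Type*} [LinearOrder α] [Fintype α] {L : ℕ}

def columnOf (κ : α → Fin L) (c : Fin L) : List α :=
  (Finset.univ.filter fun x => κ x = c.rev).sort (· ≤ ·)

lemma mem_columnOf {κ : α → Fin L} {c : Fin L} {x : α} : x ∈ columnOf κ c ↔ κ x = c.rev := by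
  simp [columnOf]

lemma nodup_columnOf (κ : α → Fin L) (c : Fin L) : (columnOf κ c).Nodup :=
  Finset.sort_nodup _ _

lemma pairwise_lt_columnOf (κ : α → Fin L) (c : Fin L) : (columnOf κ c).Pairwise (· < ·) :=
  ((Finset.pairwise_sort _ _).and (nodup_columnOf κ c)).imp fun h => h.1.lt_of_ne h.2

lemma length_columnOf (κ : α → Fin L) (c : Fin L) :
    (columnOf κ c).length = Set.ncard {x | κ x = c.rev} := by
  rw [columnOf, Finset.length_sort, Set.ncard_eq_toFinset_card']
  congr 1
  ext x
  simp

lemma existsUnique_mem_columnOf (κ : α → Fin L) (x : α) : ∃! c, x ∈ columnOf κ c :=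
  ⟨(κ x).rev, mem_columnOf.2 (Fin.rev_rev _).symm,
    fun c hc => by rw [mem_columnOf.1 hc, Fin.rev_rev]⟩

lemma columnOf_injective : Function.Injective (columnOf : (α → Fin L) → Fin L → List α) := by
  intro κ κ' h
  funext x
  have hx : x ∈ columnOf κ' (κ x).rev := h ▸ mem_columnOf.2 (Fin.rev_rev _).symm
  rw [mem_columnOf, Fin.rev_rev] at hx
  exact hx.symm

lemma columnOf_eq {κ : α → Fin L} {c : Fin L} {l : List α} (hl : l.Pairwise (· < ·))
    (hmem : ∀ x, x ∈ l ↔ κ x = c.rev) : columnOf κ c = l := by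
  have hperm : (columnOf κ c).Perm l :=
    (List.perm_ext_iff_of_nodup (nodup_columnOf κ c) (hl.imp ne_of_lt)).2
      fun x => by rw [mem_columnOf, hmem]
  exact hperm.eq_of_pairwise' (pairwise_lt_columnOf κ c |>.imp le_of_lt) (hl.imp le_of_lt)

lemma exists_columnOf_eq {cols : Fin L → List α} (hsorted : ∀ c, (cols c).Pairwise (· < ·))
    (hpart : ∀ x, ∃! c, x ∈ cols c) : ∃ κ : α → Fin L, columnOf κ = cols := by
  choose col hcol hcol_unique using hpart
  refine ⟨fun x => (col x).rev, funext fun c => columnOf_eq (hsorted c) fun x => ?_⟩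
  rw [Fin.rev_inj]
  exact ⟨fun h => (hcol_unique x c h).symm, fun h => h ▸ hcol x⟩

variable {r : α → α → Prop}

lemma isChain_columnOf (hlt : ∀ x y, r x y → x < y) {κ : α → Fin L}
    (hproper : ∀ x y, Incomp r x y → κ x ≠ κ y) (c : Fin L) : (columnOf κ c).IsChain r := by
  refine List.Pairwise.isChain ((pairwise_lt_columnOf κ c).imp_of_mem fun {a b} ha hb hab => ?_)
  rw [mem_columnOf] at ha hb
  by_contra hnot
  exact hproper a b ⟨hab.ne, hnot, fun hba => (hlt b a hba).not_gt hab⟩ (ha.trans hb.symm)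

lemma proper_of_isChain_columnOf (htrans : ∀ x y z, r x y → r y z → r x z) {κ : α → Fin L}
    (hchain : ∀ c, (columnOf κ c).IsChain r) (x y : α) (hxy : Incomp r x y) : κ x ≠ κ y := by
  intro hκ
  have : IsTrans α r := ⟨htrans⟩
  have : Std.Symm fun a b => r a b ∨ r b a := ⟨fun _ _ => Or.symm⟩
  have hx : x ∈ columnOf κ (κ x).rev := mem_columnOf.2 (Fin.rev_rev _).symm
  have hy : y ∈ columnOf κ (κ x).rev := mem_columnOf.2 (by rw [Fin.rev_rev, hκ])
  have hcomparable : (columnOf κ (κ x).rev).Pairwise fun a b => r a b ∨ r b a :=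
    (List.isChain_iff_pairwise.1 (hchain _)).imp Or.inl
  rcases hcomparable.forall hx hy hxy.1 with h | h
  · exact hxy.2.1 h
  · exact hxy.2.2 h

lemma ncard_inversions_columnOf (κ : α → Fin L) :
    Set.ncard {p : α × α |
        (∃ c1 c2, c1 < c2 ∧ p.1 ∈ columnOf κ c1 ∧ p.2 ∈ columnOf κ c2) ∧
        Incomp r p.1 p.2 ∧ p.2 < p.1} =
      Set.ncard {p : α × α | p.1 < p.2 ∧ Incomp r p.1 p.2 ∧ κ p.1 < κ p.2} := by
  rw [← Set.ncard_image_of_injective _ Prod.swap_injective, Set.image_swap_eq_preimage_swap]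
  congr 1
  ext ⟨a, b⟩
  simp only [Set.mem_ofPred_eq, Set.mem_preimage, Prod.swap_prod_mk, mem_columnOf]
  constructor
  · rintro ⟨⟨c1, c2, hc, hb, ha⟩, hinc, hba⟩
    exact ⟨hba, hinc.symm, by rw [ha, hb]; exact Fin.rev_lt_rev.2 hc⟩
  · rintro ⟨hba, hinc, hκ⟩
    exact ⟨⟨_, _, Fin.rev_lt_rev.2 hκ, (Fin.rev_rev _).symm, (Fin.rev_rev _).symm⟩, hinc.symm, hba⟩

end Columns

theorem statement13_general (n : ℕ) (r : Fin n → Fin n → Prop)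
    (hirr : ∀ x, ¬ r x x) (htrans : ∀ x y z, r x y → r y z → r x z)
    (hlabel : ∀ x y : Fin n,
      ((Set.ncard {z | r z x} : ℤ) - (Set.ncard {z | r x z} : ℤ) <
       (Set.ncard {z | r z y} : ℤ) - (Set.ncard {z | r y z} : ℤ)) → x < y)
    (lam : List ℕ) :
    (∑ᶠ κ : {κ : Fin n → Fin lam.length //
        (∀ x y, Incomp r x y → κ x ≠ κ y) ∧
        ∀ i : Fin lam.length, Set.ncard {x | κ x = i} = lam.get i.rev},
      (Polynomial.X : Polynomial ℤ) ^
        Set.ncard {p : Fin n × Fin n |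
          p.1 < p.2 ∧ Incomp r p.1 p.2 ∧ κ.1 p.1 < κ.1 p.2}) =
    ∑ᶠ T : {cols : Fin lam.length → List (Fin n) //
        (∀ c, (cols c).length = lam.get c) ∧
        (∀ c, (cols c).Chain' r) ∧
        (∀ c, (cols c).Nodup) ∧
        ∀ x : Fin n, ∃! c, x ∈ cols c},
      (Polynomial.X : Polynomial ℤ) ^
        Set.ncard {p : Fin n × Fin n |
          (∃ c1 c2, c1 < c2 ∧ p.1 ∈ T.1 c1 ∧ p.2 ∈ T.1 c2) ∧
          Incomp r p.1 p.2 ∧ p.2 < p.1} := by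
  have hlt : ∀ x y, r x y → x < y := fun _ _ => lt_of_rel_of_labeling hirr htrans hlabel
  have hlength : ∀ κ : Fin n → Fin lam.length,
      (∀ i, Set.ncard {x | κ x = i} = lam.get i.rev) → ∀ c, (columnOf κ c).length = lam.get c :=
    fun κ hκ c => by rw [length_columnOf, hκ, Fin.rev_rev]
  refine finsum_eq_of_bijective
    (fun κ => ⟨columnOf κ.1, hlength κ.1 κ.2.2, isChain_columnOf hlt κ.2.1, nodup_columnOf κ.1,
      existsUnique_mem_columnOf κ.1⟩)
    ⟨fun κ κ' h => Subtype.ext (columnOf_injective (congrArg Subtype.val h)), ?_⟩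
    fun κ => by rw [ncard_inversions_columnOf]
  rintro ⟨cols, hlen, hchain, -, hpart⟩
  obtain ⟨κ, rfl⟩ := exists_columnOf_eq
    (fun c => List.isChain_iff_pairwise.1 ((hchain c).imp fun _ _ => hlt _ _)) hpart
  refine ⟨⟨κ, proper_of_isChain_columnOf htrans hchain, fun i => ?_⟩, rfl⟩
  rw [← hlen i.rev, length_columnOf, Fin.rev_rev]

/-- for a suitably labeled unit interval order `P` on
`{1,…,n}` and a partition `λ` of `n` with `r` parts, the ascent generating
function over proper colorings with class sizes `λ_{r+1-i}` equals the
inversion generating function over column-strict `P`-tableaux of shape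
`λ^tr` (encoded by their columns, of lengths `λ_1, …, λ_r`). -/
theorem statement13 (n : ℕ) (r : Fin n → Fin n → Prop)
    (hirr : ∀ x, ¬ r x x) (htrans : ∀ x y z, r x y → r y z → r x z)
    (huio : UnitIntervalOrder r)
    (hlabel : ∀ x y : Fin n,
      ((Set.ncard {z | r z x} : ℤ) - (Set.ncard {z | r x z} : ℤ) <
       (Set.ncard {z | r z y} : ℤ) - (Set.ncard {z | r y z} : ℤ)) → x < y)
    (lam : List ℕ) (hlam : IsPartition lam n) :
    (∑ᶠ κ : {κ : Fin n → Fin lam.length //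
        (∀ x y, Incomp r x y → κ x ≠ κ y) ∧
        ∀ i : Fin lam.length, Set.ncard {x | κ x = i} = lam.get i.rev},
      (Polynomial.X : Polynomial ℤ) ^
        Set.ncard {p : Fin n × Fin n |
          p.1 < p.2 ∧ Incomp r p.1 p.2 ∧ κ.1 p.1 < κ.1 p.2}) =
    ∑ᶠ T : {cols : Fin lam.length → List (Fin n) //
        (∀ c, (cols c).length = lam.get c) ∧
        (∀ c, (cols c).Chain' r) ∧
        (∀ c, (cols c).Nodup) ∧
        ∀ x : Fin n, ∃! c, x ∈ cols c},
      (Polynomial.X : Polynomial ℤ) ^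
        Set.ncard {p : Fin n × Fin n |
          (∃ c1 c2, c1 < c2 ∧ p.1 ∈ T.1 c1 ∧ p.2 ∈ T.1 c2) ∧
          Incomp r p.1 p.2 ∧ p.2 < p.1} :=
  statement13_general n r hirr htrans hlabel lam

end

end ZigZag
end
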